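/- Let X be any graph and let c be an integral 1-cycle on X. Then there exist n ≥ 0 and simple loops σ₁, …, σₙ in X with supp(c_{σᵢ}) ⊆ supp(c) for each i, such that c = c_{σ₁} + ⋯ + c_{σₙ}. -/

import Mathlib

/-! Start at an edge on which the integral cycle `c` is positive and keep leaving the current
vertex along another such edge; this is always possible because the outflow of `c` at every
vertex vanishes. Since only finitely many edges are available, a vertex is eventually revisited,
which closes a simple loop `σ` inside `supp c`. By integrality every coefficient of `c_σ` lies
between `0` and the corresponding coefficient of `c`, so `c - c_σ` is again an integral cycle,
supported in `supp c` and of strictly smaller `ℓ¹`-norm; induct on that norm. -/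

/-- A graph in the sense of Sunada's topological crystallography: a set of vertices,
a set of edges, source and target maps, and a fixed-point free involution sending
each edge to its inverse. -/
structure SunadaGraph where
  V : Type
  E : Type
  s : E → V
  t : E → V
  inv : E → E
  s_inv : ∀ e, s (inv e) = t e
  t_inv : ∀ e, t (inv e) = s e
  inv_inv : ∀ e, inv (inv e) = e
  inv_ne : ∀ e, inv e ≠ e

namespace SunadaGraph

variable (X : SunadaGraph)

/-- `X.IsPath x y γ` : the word of edges `γ` is a path from `x` to `y` in `X`. -/
inductive IsPath : X.V → X.V → List X.E → Prop
  | nil (x : X.V) : IsPath x x []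
  | cons (e : X.E) {y : X.V} {γ : List X.E} (h : IsPath (X.t e) y γ) :
      IsPath (X.s e) y (e :: γ)

/-- A graph is connected if any two vertices are joined by a path. -/
def Connected : Prop := ∀ x y : X.V, ∃ γ : List X.E, X.IsPath x y γ

/-- An edge is a bridge if there is no path from its target to its source
avoiding both the edge and its inverse. -/
def IsBridge (e : X.E) : Prop :=
  ¬ ∃ γ : List X.E, X.IsPath (X.t e) (X.s e) γ ∧ e ∉ γ ∧ X.inv e ∉ γ

/-- The space `C₁(X,ℝ)` of real 1-chains: formal linear combinations of edges
with `e⁻¹ = -e`, realized as finitely supported functions `c : E → ℝ` with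
`c(e⁻¹) = - c(e)`. -/
noncomputable def C1 : Submodule ℝ (X.E →₀ ℝ) where
  carrier := {c | ∀ e, c (X.inv e) = - c e}
  add_mem' := by
    intro a b ha hb e
    simp only [Finsupp.add_apply, ha e, hb e]
    ring
  zero_mem' := by intro e; simp
  smul_mem' := by
    intro r c hc e
    simp only [Finsupp.smul_apply, hc e, smul_eq_mul]
    ring

/-- The 1-chain associated to a single edge. -/
noncomputable def edgeChain (e : X.E) : ↥X.C1 :=
  ⟨Finsupp.single e 1 - Finsupp.single (X.inv e) 1, by
    intro f
    classical
    have h1 : (e = X.inv f) ↔ (X.inv e = f) := by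
      constructor
      · rintro rfl; exact X.inv_inv f
      · rintro rfl; exact (X.inv_inv e).symm
    have h2 : (X.inv e = X.inv f) ↔ (e = f) := by
      constructor
      · intro h
        have := congrArg X.inv h
        rwa [X.inv_inv, X.inv_inv] at this
      · rintro rfl; rfl
    simp only [Finsupp.sub_apply, Finsupp.single_apply, h1, h2]
    ring⟩

/-- The 1-chain `c_γ` of a path `γ`. -/
noncomputable def pathChain (γ : List X.E) : ↥X.C1 := (γ.map X.edgeChain).sum

/-- The inner product on `C₁(X,ℝ)` for which the edges form an orthonormal basis
(with `e⁻¹` counting as the negative of `e`). -/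
noncomputable def chainInner (c d : ↥X.C1) : ℝ :=
  (1/2) * ((c : X.E →₀ ℝ).sum fun e x => x * (d : X.E →₀ ℝ) e)

/-- The boundary of a 1-chain. -/
noncomputable def boundary (c : ↥X.C1) : X.V →₀ ℝ :=
  (c : X.E →₀ ℝ).sum fun e x => x • (Finsupp.single (X.t e) (1:ℝ) - Finsupp.single (X.s e) 1)

/-- A 1-cycle is a 1-chain with vanishing boundary. -/
def IsCycle (c : ↥X.C1) : Prop := X.boundary c = 0

/-- An integral 1-chain: all coefficients are integers. -/
def IsIntegral (c : ↥X.C1) : Prop := ∀ e, ∃ n : ℤ, (c : X.E →₀ ℝ) e = (n : ℝ)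

/-- The support of a 1-chain: the set of edges with positive coefficient. -/
def chainSupp (c : ↥X.C1) : Set X.E := {e | 0 < (c : X.E →₀ ℝ) e}

/-- `p` is the orthogonal projection of `C₁(X,ℝ)` onto the space `Z₁(X,ℝ)` of 1-cycles:
it takes values in `Z₁(X,ℝ)` and `c - p c` is orthogonal to every 1-cycle. -/
def IsOrthoProj (p : ↥X.C1 → ↥X.C1) : Prop :=
  (∀ c, X.IsCycle (p c)) ∧ (∀ c z, X.IsCycle z → X.chainInner (c - p c) z = 0)

/-- Two paths from `x` to `y` are homologous if one can be obtained from the other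
by repeatedly inserting or deleting subwords `e e⁻¹`, and/or replacing a subword
`στ` by `τσ` where `σ` and `τ` are loops based at the same vertex. -/
inductive Homologous : X.V → X.V → List X.E → List X.E → Prop
  | refl {x y : X.V} (γ : List X.E) (h : X.IsPath x y γ) : Homologous x y γ γ
  | cancel {x y : X.V} (γ δ : List X.E) (e : X.E)
      (h : X.IsPath x y (γ ++ e :: X.inv e :: δ)) (h' : X.IsPath x y (γ ++ δ)) :
      Homologous x y (γ ++ e :: X.inv e :: δ) (γ ++ δ)
  | swap {x y : X.V} (γ σ τ δ : List X.E) (v : X.V)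
      (hσ : X.IsPath v v σ) (hτ : X.IsPath v v τ)
      (h : X.IsPath x y (γ ++ (σ ++ (τ ++ δ))))
      (h' : X.IsPath x y (γ ++ (τ ++ (σ ++ δ)))) :
      Homologous x y (γ ++ (σ ++ (τ ++ δ))) (γ ++ (τ ++ (σ ++ δ)))
  | symm {x y : X.V} {a b : List X.E} (h : Homologous x y a b) : Homologous x y b a
  | trans {x y : X.V} {a b c : List X.E} (h1 : Homologous x y a b)
      (h2 : Homologous x y b c) : Homologous x y a c

/-- A simple path: no vertex is visited twice. -/
def IsSimplePath (x y : X.V) (γ : List X.E) : Prop :=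
  X.IsPath x y γ ∧ (x :: γ.map X.t).Nodup

/-- A simple loop based at `x`: a loop in which every vertex other than `x` occurs
at most once and `x` occurs only as the initial and final vertex. -/
def IsSimpleLoop (x : X.V) (γ : List X.E) : Prop :=
  X.IsPath x x γ ∧ (x :: (γ.map X.t).dropLast).Nodup

/-- A reduced word: no subword of the form `e e⁻¹`. -/
def Reduced (γ : List X.E) : Prop := γ.Chain' (fun a b => b ≠ X.inv a)

/-- A spanning tree: a set of edges, closed under inversion, such that the spanning
subgraph it determines is connected and has no nonempty reduced loops. -/
def IsSpanningTree (S : Set X.E) : Prop :=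
  (∀ e ∈ S, X.inv e ∈ S) ∧
  (∀ x y : X.V, ∃ γ : List X.E, X.IsPath x y γ ∧ ∀ e ∈ γ, e ∈ S) ∧
  (∀ (x : X.V) (γ : List X.E), X.IsPath x x γ → (∀ e ∈ γ, e ∈ S) → X.Reduced γ → γ = [])

/-- The quotient of a set of 1-chains by the translation action of the
integral 1-cycles. -/
def transQuot (S : Set ↥X.C1) : Type :=
  Quot (fun a b : S => ∃ z : ↥X.C1, X.IsCycle z ∧ X.IsIntegral z ∧ (b : ↥X.C1) = (a : ↥X.C1) + z)

end SunadaGraph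

namespace SunadaGraph

variable {X : SunadaGraph}

section Chains

lemma C1_inv_apply (c : ↥X.C1) (e : X.E) : (c : X.E →₀ ℝ) (X.inv e) = -(c : X.E →₀ ℝ) e :=
  c.2 e

lemma exists_pos_apply_of_ne_zero {c : ↥X.C1} (hc : c ≠ 0) : ∃ e, 0 < (c : X.E →₀ ℝ) e := by
  obtain ⟨e, he⟩ : ∃ e, (c : X.E →₀ ℝ) e ≠ 0 := by
    by_contra! h
    exact hc (Subtype.ext (Finsupp.ext h))
  rcases he.lt_or_gt with hneg | hpos
  · exact ⟨X.inv e, by rw [C1_inv_apply]; linarith⟩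
  · exact ⟨e, hpos⟩

lemma pathChain_cons (e : X.E) (γ : List X.E) :
    X.pathChain (e :: γ) = X.edgeChain e + X.pathChain γ := by
  simp [pathChain]

lemma pathChain_apply [DecidableEq X.E] (γ : List X.E) (f : X.E) :
    (X.pathChain γ : X.E →₀ ℝ) f = γ.count f - γ.count (X.inv f) := by
  induction γ with
  | nil => simp [pathChain]
  | cons e γ ih =>
    have hinv : X.inv e = f ↔ e = X.inv f :=
      ⟨fun h => h ▸ (X.inv_inv e).symm, fun h => h ▸ X.inv_inv f⟩
    rw [pathChain_cons, Submodule.coe_add, Finsupp.add_apply, ih]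
    simp only [edgeChain, Finsupp.sub_apply, Finsupp.single_apply, hinv, List.count_cons,
      beq_iff_eq]
    push_cast
    ring

lemma pathChain_apply_of_mem [DecidableEq X.E] {γ : List X.E} (hγ : γ.Nodup) {e : X.E}
    (he : e ∈ γ) (hinv : X.inv e ∉ γ) : (X.pathChain γ : X.E →₀ ℝ) e = 1 := by
  rw [pathChain_apply, List.count_eq_one_of_mem hγ he, List.count_eq_zero_of_not_mem hinv]
  norm_num

lemma IsIntegral.sub {c d : ↥X.C1} (hc : X.IsIntegral c) (hd : X.IsIntegral d) :
    X.IsIntegral (c - d) := by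
  intro e
  obtain ⟨m, hm⟩ := hc e
  obtain ⟨n, hn⟩ := hd e
  exact ⟨m - n, by rw [Submodule.coe_sub, Finsupp.sub_apply, hm, hn]; push_cast; ring⟩

lemma isIntegral_pathChain (γ : List X.E) : X.IsIntegral (X.pathChain γ) := by
  classical
  intro e
  exact ⟨γ.count e - γ.count (X.inv e), by rw [pathChain_apply]; push_cast; ring⟩

lemma IsIntegral.one_le_of_pos {c : ↥X.C1} (hc : X.IsIntegral c) {e : X.E}
    (he : 0 < (c : X.E →₀ ℝ) e) : 1 ≤ (c : X.E →₀ ℝ) e := by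
  obtain ⟨n, hn⟩ := hc e
  rw [hn] at he ⊢
  exact_mod_cast (Int.cast_pos.1 he : 0 < n)

end Chains

section Boundary

lemma boundary_eq_linearCombination (c : ↥X.C1) :
    X.boundary c = Finsupp.linearCombination ℝ
      (fun e => Finsupp.single (X.t e) (1 : ℝ) - Finsupp.single (X.s e) 1) c :=
  (Finsupp.linearCombination_apply ℝ _).symm

lemma boundary_add (c d : ↥X.C1) : X.boundary (c + d) = X.boundary c + X.boundary d := by
  simp only [boundary_eq_linearCombination, Submodule.coe_add, map_add]

lemma IsCycle.sub {c d : ↥X.C1} (hc : X.IsCycle c) (hd : X.IsCycle d) : X.IsCycle (c - d) := by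
  simp only [IsCycle, boundary_eq_linearCombination, Submodule.coe_sub, map_sub] at hc hd ⊢
  rw [hc, hd, sub_zero]

lemma boundary_edgeChain (e : X.E) :
    X.boundary (X.edgeChain e) =
      (2 : ℝ) • (Finsupp.single (X.t e) 1 - Finsupp.single (X.s e) 1) := by
  simp only [boundary_eq_linearCombination, edgeChain, map_sub,
    Finsupp.linearCombination_single, one_smul, s_inv, t_inv]
  module

lemma boundary_pathChain {x y : X.V} {γ : List X.E} (h : X.IsPath x y γ) :
    X.boundary (X.pathChain γ) = (2 : ℝ) • (Finsupp.single y 1 - Finsupp.single x 1) := by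
  induction h with
  | nil x => simp [boundary, pathChain]
  | cons e h ih =>
    rw [pathChain_cons, boundary_add, boundary_edgeChain, ih]
    module

lemma isCycle_pathChain {x : X.V} {γ : List X.E} (h : X.IsPath x x γ) :
    X.IsCycle (X.pathChain γ) := by
  rw [IsCycle, boundary_pathChain h, sub_self, smul_zero]

lemma boundary_apply [DecidableEq X.V] (c : ↥X.C1) (v : X.V) :
    X.boundary c v = -2 * ∑ e ∈ (c : X.E →₀ ℝ).support with X.s e = v, (c : X.E →₀ ℝ) e := by
  have hinv_mem : ∀ e ∈ (c : X.E →₀ ℝ).support, X.inv e ∈ (c : X.E →₀ ℝ).support := by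
    simp [C1_inv_apply]
  -- `e ↦ e⁻¹` pairs off the terms: it swaps `s` and `t` and changes the sign of `c`
  have hpair : ∑ e ∈ (c : X.E →₀ ℝ).support,
      (c : X.E →₀ ℝ) e * ((if X.t e = v then 1 else 0) + if X.s e = v then 1 else 0) = 0 :=
    Finset.sum_involution (fun e _ => X.inv e)
      (fun e _ => by rw [C1_inv_apply, X.s_inv, X.t_inv]; ring)
      (fun e _ _ => X.inv_ne e) hinv_mem (fun e _ => X.inv_inv e)
  rw [Finset.sum_filter, boundary, Finsupp.sum_apply, Finsupp.sum]
  simp only [Finsupp.smul_apply, Finsupp.sub_apply, Finsupp.single_apply, smul_eq_mul, mul_sub,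
    Finset.sum_sub_distrib, mul_ite, mul_one, mul_zero]
  simp only [mul_add, Finset.sum_add_distrib, mul_ite, mul_one, mul_zero] at hpair
  linarith

lemma IsCycle.exists_pos_succ {c : ↥X.C1} (hc : X.IsCycle c) {e : X.E}
    (he : 0 < (c : X.E →₀ ℝ) e) : ∃ f, 0 < (c : X.E →₀ ℝ) f ∧ X.s f = X.t e := by
  classical
  have hsum : ∑ f ∈ (c : X.E →₀ ℝ).support with X.s f = X.t e, (c : X.E →₀ ℝ) f = 0 := by
    have := boundary_apply c (X.t e)
    rw [hc, Finsupp.zero_apply] at this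
    linarith
  have hinv : (c : X.E →₀ ℝ) (X.inv e) ≠ 0 := by rw [C1_inv_apply]; linarith
  obtain ⟨f, hf, hpos⟩ := Finset.exists_pos_of_sum_zero_of_exists_nonzero _ hsum
    ⟨X.inv e, Finset.mem_filter.2 ⟨Finsupp.mem_support_iff.2 hinv, X.s_inv e⟩, hinv⟩
  exact ⟨f, hpos, (Finset.mem_filter.1 hf).2⟩

end Boundary

section Paths

lemma IsPath.concat {x y : X.V} {γ : List X.E} (h : X.IsPath x y γ) {f : X.E} (hf : X.s f = y) :
    X.IsPath x (X.t f) (γ ++ [f]) := by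
  induction h with
  | nil x => exact hf ▸ .cons f (.nil _)
  | cons e _ ih => exact .cons e (ih hf)

lemma IsSimplePath.nodup {x y : X.V} {γ : List X.E} (h : X.IsSimplePath x y γ) : γ.Nodup :=
  h.2.of_cons.of_map X.t

lemma IsSimplePath.concat {x y : X.V} {γ : List X.E} (h : X.IsSimplePath x y γ) {f : X.E}
    (hf : X.s f = y) (hfresh : X.t f ∉ x :: γ.map X.t) : X.IsSimplePath x (X.t f) (γ ++ [f]) := by
  refine ⟨h.1.concat hf, ?_⟩
  rw [List.map_append, List.map_singleton, ← List.cons_append]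
  exact List.nodup_append.2 ⟨h.2, List.nodup_singleton _,
    fun a ha b hb => by rw [List.mem_singleton.1 hb]; exact ne_of_mem_of_not_mem ha hfresh⟩

lemma IsSimplePath.exists_suffix {x y : X.V} {γ : List X.E} (h : X.IsSimplePath x y γ) {v : X.V}
    (hv : v ∈ x :: γ.map X.t) : ∃ δ, X.IsSimplePath v y δ ∧ δ <:+ γ := by
  obtain ⟨hpath, hnd⟩ := h
  induction hpath with
  | nil x => exact ⟨[], by simp_all [IsSimplePath, IsPath.nil], List.nil_suffix⟩
  | cons e hpath ih =>
    rcases List.mem_cons.1 hv with rfl | hv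
    · exact ⟨_, ⟨.cons e hpath, hnd⟩, List.suffix_refl _⟩
    · obtain ⟨δ, hδ, hsub⟩ := ih (by simpa using hv) hnd.of_cons
      exact ⟨δ, hδ, hsub.trans (List.suffix_cons _ _)⟩

lemma IsPath.map_s {x y : X.V} {γ : List X.E} (h : X.IsPath x y γ) :
    γ.map X.s = (x :: γ.map X.t).dropLast := by
  induction h with
  | nil x => rfl
  | cons e _ ih => rw [List.map_cons, ih, List.map_cons, List.dropLast_cons_cons]

lemma IsSimpleLoop.nodup {x : X.V} {γ : List X.E} (h : X.IsSimpleLoop x γ) : γ.Nodup := by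
  rcases γ with _ | ⟨e, δ⟩
  · exact List.nodup_nil
  · have hs := h.1.map_s
    rw [List.dropLast_cons_of_ne_nil (by simp)] at hs
    exact (hs ▸ h.2).of_map X.s

lemma IsSimplePath.isSimpleLoop_concat {v y : X.V} {δ : List X.E} (h : X.IsSimplePath v y δ)
    {f : X.E} (hs : X.s f = y) (ht : X.t f = v) : X.IsSimpleLoop v (δ ++ [f]) :=
  ⟨ht ▸ h.1.concat hs, by simpa [List.dropLast_concat] using h.2⟩

theorem exists_simpleLoop_of_forall_exists_succ {P : X.E → Prop} (hP : {e | P e}.Finite)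
    (hsucc : ∀ e, P e → ∃ f, P f ∧ X.s f = X.t e) {e₀ : X.E} (he₀ : P e₀) :
    ∃ v δ, X.IsSimpleLoop v δ ∧ δ ≠ [] ∧ ∀ e ∈ δ, P e := by
  classical
  by_contra! hno
  have hlong : ∀ n : ℕ, ∃ x y γ, X.IsSimplePath x y γ ∧ (∀ e ∈ γ, P e) ∧ γ.length = n ∧
      ∃ f, P f ∧ X.s f = y := by
    intro n
    induction n with
    | zero => exact ⟨_, _, [], ⟨.nil _, List.nodup_singleton _⟩, by simp, rfl, e₀, he₀, rfl⟩
    | succ n ih =>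
      obtain ⟨x, y, γ, hγ, hγP, hlen, f, hf, hsf⟩ := ih
      by_cases hclosed : X.t f ∈ x :: γ.map X.t
      · obtain ⟨δ, hδ, hsub⟩ := hγ.exists_suffix hclosed
        obtain ⟨e, he, hne⟩ := hno _ _ (hδ.isSimpleLoop_concat hsf rfl) (by simp)
        rcases List.mem_append.1 he with he | he
        · exact absurd (hγP e (hsub.subset he)) hne
        · exact absurd (List.mem_singleton.1 he ▸ hf) hne
      · obtain ⟨g, hg, hsg⟩ := hsucc f hf
        refine ⟨x, _, γ ++ [f], hγ.concat hsf hclosed, ?_, by simp [hlen], g, hg, hsg⟩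
        simpa [or_imp, forall_and] using ⟨hγP, hf⟩
  obtain ⟨x, y, γ, hγ, hγP, hlen, -⟩ := hlong (hP.toFinset.card + 1)
  have hcard := Finset.card_le_card (s := γ.toFinset) (t := hP.toFinset) (by
    intro e he; simpa using hγP e (List.mem_toFinset.1 he))
  rw [List.toFinset_card_of_nodup hγ.nodup, hlen] at hcard
  omega

end Paths

section Conformal

def ConformsTo (d c : ↥X.C1) : Prop :=
  ∀ e, (d : X.E →₀ ℝ) e ∈ Set.uIcc 0 ((c : X.E →₀ ℝ) e)

/-- Twice the usual `ℓ¹`-norm: the coefficients of both `e` and `e⁻¹` enter the sum. -/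
noncomputable def l1Norm (c : ↥X.C1) : ℝ := (c : X.E →₀ ℝ).sum fun _ a => |a|

lemma l1Norm_nonneg (c : ↥X.C1) : 0 ≤ X.l1Norm c :=
  Finset.sum_nonneg fun _ _ => abs_nonneg _

lemma abs_apply_le_l1Norm (c : ↥X.C1) (e : X.E) : |(c : X.E →₀ ℝ) e| ≤ X.l1Norm c := by
  by_cases he : e ∈ (c : X.E →₀ ℝ).support
  · exact Finset.single_le_sum (f := fun e => |(c : X.E →₀ ℝ) e|) (fun _ _ => abs_nonneg _) he
  · rw [Finsupp.notMem_support_iff.1 he, abs_zero]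
    exact l1Norm_nonneg c

namespace ConformsTo

variable {c d : ↥X.C1}

lemma chainSupp_subset (h : X.ConformsTo d c) : X.chainSupp d ⊆ X.chainSupp c := fun e he => by
  rcases Set.mem_uIcc.1 (h e) with ⟨_, hle⟩ | ⟨_, hle⟩
  · exact he.trans_le hle
  · exact absurd he (not_lt.2 hle)

lemma chainSupp_sub_subset (h : X.ConformsTo d c) : X.chainSupp (c - d) ⊆ X.chainSupp c :=
    fun e he => by
  simp only [chainSupp, Set.mem_ofPred_eq, Submodule.coe_sub, Finsupp.sub_apply] at he ⊢
  rcases Set.mem_uIcc.1 (h e) with ⟨hd, _⟩ | ⟨hle, hd⟩ <;> linarith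

lemma l1Norm_sub (h : X.ConformsTo d c) : X.l1Norm (c - d) = X.l1Norm c - X.l1Norm d := by
  have hzero : ∀ e, (c : X.E →₀ ℝ) e = 0 → (d : X.E →₀ ℝ) e = 0 := fun e he => by
    simpa [he] using h e
  have hsupp_d : (d : X.E →₀ ℝ).support ⊆ (c : X.E →₀ ℝ).support := fun e he => by
    simp only [Finsupp.mem_support_iff] at he ⊢
    exact fun hc => he (hzero e hc)
  have hsupp_sub : (c - d : X.E →₀ ℝ).support ⊆ (c : X.E →₀ ℝ).support := fun e he => by
    simp only [Finsupp.mem_support_iff, Finsupp.sub_apply] at he ⊢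
    exact fun hc => he (by rw [hc, hzero e hc, sub_zero])
  rw [l1Norm, l1Norm, l1Norm, Submodule.coe_sub,
    Finsupp.sum_of_support_subset _ hsupp_sub _ (fun _ _ => abs_zero),
    Finsupp.sum_of_support_subset _ hsupp_d _ (fun _ _ => abs_zero), Finsupp.sum,
    ← Finset.sum_sub_distrib]
  refine Finset.sum_congr rfl fun e _ => ?_
  -- `c e - d e` and `d e` have the same sign, so their absolute values add up
  have hsplit :=
    (abs_add_eq_add_abs_iff ((c : X.E →₀ ℝ) e - (d : X.E →₀ ℝ) e) ((d : X.E →₀ ℝ) e)).2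
    (by rcases Set.mem_uIcc.1 (h e) with ⟨h1, h2⟩ | ⟨h1, h2⟩ <;> [left; right] <;>
      constructor <;> linarith)
  rw [sub_add_cancel] at hsplit
  rw [Finsupp.sub_apply, hsplit, add_sub_cancel_right]

end ConformsTo

lemma inv_notMem_of_forall_pos {c : ↥X.C1} {γ : List X.E} (hpos : ∀ e ∈ γ, 0 < (c : X.E →₀ ℝ) e)
    {e : X.E} (he : e ∈ γ) : X.inv e ∉ γ := fun hinv => by
  have := hpos _ hinv
  rw [C1_inv_apply] at this
  linarith [hpos e he]

lemma conformsTo_pathChain {c : ↥X.C1} (hc : X.IsIntegral c) {γ : List X.E} (hγ : γ.Nodup)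
    (hpos : ∀ e ∈ γ, 0 < (c : X.E →₀ ℝ) e) : X.ConformsTo (X.pathChain γ) c := by
  classical
  intro e
  by_cases he : e ∈ γ
  · rw [pathChain_apply_of_mem hγ he (inv_notMem_of_forall_pos hpos he)]
    exact Set.mem_uIcc.2 (.inl ⟨zero_le_one, hc.one_le_of_pos (hpos e he)⟩)
  by_cases he' : X.inv e ∈ γ
  · have hval := pathChain_apply_of_mem hγ he' (by rwa [X.inv_inv])
    have hc' := hc.one_le_of_pos (hpos _ he')
    rw [C1_inv_apply] at hval hc'
    exact Set.mem_uIcc.2 (.inr ⟨by linarith, by linarith⟩)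
  · rw [pathChain_apply, List.count_eq_zero_of_not_mem he, List.count_eq_zero_of_not_mem he']
    simp

end Conformal

section Decomposition

def IsSimpleLoopSum (S : Set X.E) (c : ↥X.C1) : Prop :=
  ∃ (n : ℕ) (v : Fin n → X.V) (σ : Fin n → List X.E),
    (∀ i, X.IsSimpleLoop (v i) (σ i)) ∧ (∀ i, X.chainSupp (X.pathChain (σ i)) ⊆ S) ∧
      c = ∑ i, X.pathChain (σ i)

lemma isSimpleLoopSum_zero (S : Set X.E) : X.IsSimpleLoopSum S 0 :=
  ⟨0, Fin.elim0, Fin.elim0, fun i => i.elim0, fun i => i.elim0, by simp⟩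

lemma IsSimpleLoopSum.mono {S T : Set X.E} (hST : S ⊆ T) {c : ↥X.C1}
    (hc : X.IsSimpleLoopSum S c) : X.IsSimpleLoopSum T c :=
  let ⟨n, v, σ, hσ, hsupp, hsum⟩ := hc
  ⟨n, v, σ, hσ, fun i => (hsupp i).trans hST, hsum⟩

lemma IsSimpleLoopSum.pathChain_add {S : Set X.E} {c : ↥X.C1} (hc : X.IsSimpleLoopSum S c)
    {v : X.V} {σ : List X.E} (hσ : X.IsSimpleLoop v σ) (hσS : X.chainSupp (X.pathChain σ) ⊆ S) :
    X.IsSimpleLoopSum S (X.pathChain σ + c) := by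
  obtain ⟨n, w, τ, hτ, hsupp, rfl⟩ := hc
  refine ⟨n + 1, Fin.cons v w, Fin.cons σ τ, Fin.cases hσ hτ, Fin.cases hσS hsupp, ?_⟩
  rw [Fin.sum_univ_succ]
  simp

theorem IsCycle.exists_simpleLoop_conformsTo {c : ↥X.C1} (hcyc : X.IsCycle c)
    (hint : X.IsIntegral c) (hc : c ≠ 0) :
    ∃ v σ, X.IsSimpleLoop v σ ∧ X.ConformsTo (X.pathChain σ) c ∧ 1 ≤ X.l1Norm (X.pathChain σ) := by
  classical
  obtain ⟨e₀, he₀⟩ := exists_pos_apply_of_ne_zero hc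
  have hfin : {e | 0 < (c : X.E →₀ ℝ) e}.Finite :=
    (c : X.E →₀ ℝ).support.finite_toSet.subset fun e he => Finsupp.mem_support_iff.2 he.ne'
  obtain ⟨v, σ, hσ, hne, hpos⟩ :=
    exists_simpleLoop_of_forall_exists_succ hfin (fun _ => hcyc.exists_pos_succ) he₀
  refine ⟨v, σ, hσ, conformsTo_pathChain hint hσ.nodup hpos, ?_⟩
  obtain ⟨e, he⟩ := List.exists_mem_of_ne_nil σ hne
  calc (1 : ℝ) = |(X.pathChain σ : X.E →₀ ℝ) e| := by
        rw [pathChain_apply_of_mem hσ.nodup he (inv_notMem_of_forall_pos hpos he), abs_one]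
    _ ≤ X.l1Norm (X.pathChain σ) := abs_apply_le_l1Norm _ e

theorem IsCycle.isSimpleLoopSum_of_l1Norm_lt {c : ↥X.C1} (hcyc : X.IsCycle c)
    (hint : X.IsIntegral c) {N : ℕ} (hlt : X.l1Norm c < N) :
    X.IsSimpleLoopSum (X.chainSupp c) c := by
  induction N generalizing c with
  | zero => exact absurd hlt (by simpa using l1Norm_nonneg c)
  | succ N ih =>
    by_cases hc : c = 0
    · exact hc ▸ isSimpleLoopSum_zero _
    obtain ⟨v, σ, hσ, hconf, hone⟩ := hcyc.exists_simpleLoop_conformsTo hint hc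
    have hrest := ih (hcyc.sub (isCycle_pathChain hσ.1))
      (hint.sub (isIntegral_pathChain σ)) (by rw [hconf.l1Norm_sub]; push_cast at hlt; linarith)
    have hsum := (hrest.mono hconf.chainSupp_sub_subset).pathChain_add hσ hconf.chainSupp_subset
    rwa [add_sub_cancel (X.pathChain σ) c] at hsum

end Decomposition

end SunadaGraph

/-- Lemma: decomposition of integral cycles.  Any integral 1-cycle `c`
can be written as `c = c_{σ₁} + ⋯ + c_{σₙ}` where the `σᵢ` are simple loops with
`supp(c_{σᵢ}) ⊆ supp(c)`. -/
theorem integral_cycle_decomposition (X : SunadaGraph) (c : ↥X.C1)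
    (hcyc : X.IsCycle c) (hint : X.IsIntegral c) :
    ∃ (n : ℕ) (v : Fin n → X.V) (σ : Fin n → List X.E),
      (∀ i, X.IsSimpleLoop (v i) (σ i)) ∧
      (∀ i, X.chainSupp (X.pathChain (σ i)) ⊆ X.chainSupp c) ∧
      c = ∑ i, X.pathChain (σ i) := by
  obtain ⟨N, hN⟩ := exists_nat_gt (X.l1Norm c)
  exact hcyc.isSimpleLoopSum_of_l1Norm_lt hint hN
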